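/- arXiv:0804.2468 — 2 statements merged into one kernel-verified Lean document; each statement's English description precedes it below -/
import Mathlib

section
/- (Corollary 3.4, Fortuin–Kasteleyn representation) For every finite simple graph G with vertex set V and edge set E, every positive integer q, and all real J and β, the Potts model partition function equals the dichromatic polynomial: ∑_{σ : V → Fin q} exp(−β·h₁(σ)) = ∑_{A ⊆ E} q^{k(A)} · v^{|A|}, where v = exp(βJ) − 1 and k(A) is the number of connected components of the spanning subgraph (V, A). -/
open Finset

/-- Number of connected components of the spanning subgraph `(V, A)`. -/
noncomputable def numComp {V : Type*} [Fintype V] (A : Finset (Sym2 V)) : ℕ :=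
  Nat.card (SimpleGraph.fromEdgeSet (A : Set (Sym2 V))).ConnectedComponent

/-- Hamiltonian `h₁(σ) = −J·|{e = {i,j} ∈ E : σ i = σ j}|`. -/
noncomputable def hamOne {V : Type*} [Fintype V] [DecidableEq V]
    (G : SimpleGraph V) [DecidableRel G.Adj] (J : ℝ) {q : ℕ} (σ : V → Fin q) : ℝ :=
  -J * ((G.edgeFinset.filter fun e => (e.map σ).IsDiag).card : ℝ)

/-!
Write `exp (-β h₁(σ)) = ∏_{e ∈ E} (1 + v·[σ constant on e])` and expand the product over
subsets `A ⊆ E`: the term of `A` is `v^|A|` if `σ` is constant on every edge of `A` and `0`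
otherwise. Exchanging the sums over `σ` and `A`, it remains to count the spin states constant
on the edges of `A`; these are the functions constant on the connected components of `(V, A)`,
so there are `q^k(A)` of them.
-/

namespace SimpleGraph

variable {V α : Type*} {G : SimpleGraph V}

theorem Reachable.eq_of_forall_adj {f : V → α} (hf : ∀ a b, G.Adj a b → f a = f b) {u v : V}
    (h : G.Reachable u v) : f u = f v := by
  rw [reachable_iff_reflTransGen] at h
  induction h with
  | refl => rfl
  | tail _ hbc ih => exact ih.trans (hf _ _ hbc)

def ConnectedComponent.liftEquiv :
    {f : V → α // ∀ a b, G.Adj a b → f a = f b} ≃ (G.ConnectedComponent → α) where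
  toFun f := Quot.lift f.1 fun _ _ h => h.eq_of_forall_adj f.2
  invFun g :=
    ⟨g ∘ G.connectedComponentMk, fun _ _ h => congrArg g (connectedComponentMk_eq_of_adj h)⟩
  left_inv _ := rfl
  right_inv g := funext fun c => by induction c using ConnectedComponent.ind; rfl

theorem forall_isDiag_map_iff_forall_adj (A : Set (Sym2 V)) (f : V → α) :
    (∀ e ∈ A, (e.map f).IsDiag) ↔ ∀ a b, (fromEdgeSet A).Adj a b → f a = f b := by
  simp only [fromEdgeSet_adj, and_imp]
  refine ⟨fun h a b hab _ => by simpa using h _ hab, fun h e he => ?_⟩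
  induction e with
  | _ a b =>
    rcases eq_or_ne a b with rfl | hab
    · simp
    · simpa using h a b he hab

end SimpleGraph

theorem card_filter_forall_isDiag_map {V α : Type*} [Fintype V] [DecidableEq V] [Fintype α]
    [DecidableEq α] (A : Finset (Sym2 V)) :
    #{f : V → α | ∀ e ∈ A, (e.map f).IsDiag} = Fintype.card α ^ numComp A := by
  have e : {f : V → α // ∀ e ∈ A, (e.map f).IsDiag} ≃
      ((SimpleGraph.fromEdgeSet (A : Set (Sym2 V))).ConnectedComponent → α) :=
    (Equiv.subtypeEquivRight fun f => SimpleGraph.forall_isDiag_map_iff_forall_adj _ f).trans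
      SimpleGraph.ConnectedComponent.liftEquiv
  rw [← Fintype.card_subtype, ← Nat.card_eq_fintype_card, ← Nat.card_eq_fintype_card,
    Nat.card_congr e, Nat.card_fun, numComp]

theorem add_one_pow_card_filter {ι R : Type*} [CommSemiring R] (s : Finset ι) (p : ι → Prop)
    [DecidablePred p] [∀ t : Finset ι, Decidable (∀ i ∈ t, p i)] (x : R) :
    (x + 1) ^ #{i ∈ s | p i} = ∑ t ∈ s.powerset, if ∀ i ∈ t, p i then x ^ #t else 0 := by
  have h : ∀ i, (if p i then x + 1 else 1) = (if p i then x else 0) + 1 := fun i => by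
    split_ifs <;> ring
  simp_rw [← prod_const, prod_filter, h, prod_add_one, prod_ite_zero, prod_const]

theorem exp_neg_mul_hamOne {V : Type*} [Fintype V] [DecidableEq V] (G : SimpleGraph V)
    [DecidableRel G.Adj] (J β : ℝ) {q : ℕ} (σ : V → Fin q) :
    Real.exp (-β * hamOne G J σ) =
      Real.exp (β * J) ^ #{e ∈ G.edgeFinset | (e.map σ).IsDiag} := by
  rw [hamOne, ← Real.exp_nat_mul]
  ring_nf

theorem potts_eq_dichromatic_general {V : Type*} [Fintype V] [DecidableEq V]
    (G : SimpleGraph V) [DecidableRel G.Adj] (q : ℕ) (J β : ℝ) :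
    (∑ σ : V → Fin q, Real.exp (-β * hamOne G J σ)) =
      ∑ A ∈ G.edgeFinset.powerset,
        (q : ℝ) ^ (numComp A) * (Real.exp (β * J) - 1) ^ (A.card) := by
  calc ∑ σ : V → Fin q, Real.exp (-β * hamOne G J σ)
      = ∑ σ : V → Fin q, ∑ A ∈ G.edgeFinset.powerset,
          if ∀ e ∈ A, (e.map σ).IsDiag then (Real.exp (β * J) - 1) ^ #A else 0 := by
        refine sum_congr rfl fun σ _ => ?_
        rw [exp_neg_mul_hamOne, ← add_one_pow_card_filter, sub_add_cancel]
    _ = ∑ A ∈ G.edgeFinset.powerset, ∑ σ : V → Fin q,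
          if ∀ e ∈ A, (e.map σ).IsDiag then (Real.exp (β * J) - 1) ^ #A else 0 := sum_comm
    _ = ∑ A ∈ G.edgeFinset.powerset, (q : ℝ) ^ numComp A * (Real.exp (β * J) - 1) ^ #A := by
        refine sum_congr rfl fun A _ => ?_
        rw [← sum_filter, sum_const, card_filter_forall_isDiag_map, Fintype.card_fin,
          nsmul_eq_mul, Nat.cast_pow]

/-- **Corollary 3.4, Fortuin–Kasteleyn representation.**
`∑_{σ : V → Fin q} exp(−β·h₁(σ)) = ∑_{A ⊆ E} q^{k(A)} · v^{|A|}` with `v = exp(βJ) − 1`. -/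
theorem potts_eq_dichromatic {V : Type*} [Fintype V] [DecidableEq V]
    (G : SimpleGraph V) [DecidableRel G.Adj] (q : ℕ) (hq : 0 < q) (J β : ℝ) :
    (∑ σ : V → Fin q, Real.exp (-β * hamOne G J σ)) =
      ∑ A ∈ G.edgeFinset.powerset,
        (q : ℝ) ^ (numComp A) * (Real.exp (β * J) - 1) ^ (A.card) :=
  potts_eq_dichromatic_general G q J β
end

section
/- (Deletion–contraction relation for the Potts partition function, contraction-free form) Let G be a finite simple graph with vertex set V and edge set E, let e = {c,d} ∈ E, and let G − e denote G with the edge e deleted. Then for every positive integer q and all real J and β, P₁(G;q,β) = P₁(G−e;q,β) + (exp(βJ) − 1) · ∑_{σ : V → Fin q, σ c = σ d} exp(−β·h₁^{G−e}(σ)), where h₁^{G−e} is the Hamiltonian of G − e. -/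
open Finset

/-- Hamiltonian of the graph on `V` with edge set `E'`:
`h₁(σ) = −J·|{e = {i,j} ∈ E' : σ i = σ j}|`. -/
noncomputable def hamOnEdges {V : Type*} [Fintype V] [DecidableEq V]
    (E' : Finset (Sym2 V)) (J : ℝ) {q : ℕ} (σ : V → Fin q) : ℝ :=
  -J * ((E'.filter fun e => (e.map σ).IsDiag).card : ℝ)

/-- Potts partition function of the graph on `V` with edge set `E'`. -/
noncomputable def pottsOnEdges {V : Type*} [Fintype V] [DecidableEq V]
    (E' : Finset (Sym2 V)) (q : ℕ) (J β : ℝ) : ℝ :=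
  ∑ σ : V → Fin q, Real.exp (-β * hamOnEdges E' J σ)

/-- **deletion–contraction for the Potts partition function,
contraction-free form.** For an edge `e = {c,d}` of `G`,
`P₁(G;q,β) = P₁(G−e;q,β) + (exp(βJ) − 1) · ∑_{σ : σ c = σ d} exp(−β·h₁^{G−e}(σ))`. -/
theorem potts_deletion_contraction {V : Type*} [Fintype V] [DecidableEq V]
    (G : SimpleGraph V) [DecidableRel G.Adj] (c d : V) (he : G.Adj c d)
    (q : ℕ) (hq : 0 < q) (J β : ℝ) :
    pottsOnEdges G.edgeFinset q J β =
      pottsOnEdges (G.edgeFinset.erase s(c, d)) q J β +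
        (Real.exp (β * J) - 1) *
          ∑ σ ∈ univ.filter (fun σ : V → Fin q => σ c = σ d),
            Real.exp (-β * hamOnEdges (G.edgeFinset.erase s(c, d)) J σ) := by

  classical
  have hem : s(c, d) ∈ G.edgeFinset := by
    simpa [SimpleGraph.mem_edgeFinset] using he
  set E := G.edgeFinset with hE
  set e : Sym2 V := s(c, d) with hedef
  have key : ∀ σ : V → Fin q,
      Real.exp (-β * hamOnEdges E J σ) =
        if σ c = σ d then Real.exp (β * J) * Real.exp (-β * hamOnEdges (E.erase e) J σ)
        else Real.exp (-β * hamOnEdges (E.erase e) J σ) := by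
    intro σ
    have hdiag : (e.map σ).IsDiag ↔ σ c = σ d := by simp [hedef]
    by_cases h : σ c = σ d
    · have hmem : e ∈ E.filter (fun e' => (e'.map σ).IsDiag) :=
        Finset.mem_filter.2 ⟨hem, hdiag.mpr h⟩
      have hcard : ((E.erase e).filter fun e' => (e'.map σ).IsDiag).card + 1
          = (E.filter fun e' => (e'.map σ).IsDiag).card := by
        rw [Finset.filter_erase, Finset.card_erase_of_mem hmem]
        exact Nat.succ_pred_eq_of_pos (Finset.card_pos.2 ⟨e, hmem⟩)
      simp only [h, if_true, hamOnEdges, ← hcard]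
      push_cast
      rw [← Real.exp_add]
      ring_nf
    · have hfe : (E.erase e).filter (fun e' => (e'.map σ).IsDiag)
          = E.filter (fun e' => (e'.map σ).IsDiag) := by
        rw [Finset.filter_erase, Finset.erase_eq_of_notMem]
        simp [hdiag, h]
      simp [hamOnEdges, hfe, h]
  unfold pottsOnEdges
  simp_rw [key]
  rw [Finset.sum_ite, ← Finset.mul_sum]
  have hsplit := Finset.sum_filter_add_sum_filter_not Finset.univ
    (fun σ : V → Fin q => σ c = σ d)
    (fun σ => Real.exp (-β * hamOnEdges (E.erase e) J σ))
  rw [← hsplit]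
  ring
end
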